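/- arXiv:math/0612406 — 3 statements merged into one kernel-verified Lean document; each statement's English description precedes it below -/
import Mathlib

section
/- Let n ≥ 1, ω = e^{2πi/n}, and work in B = ℂ[x,y]/(x^n − 1, y^n − 1). For 0 ≤ k ≤ n−1 set f_k(x) = Σ_{l=0}^{n−1} ω^{−kl} x^l and f_k(y) = Σ_{l=0}^{n−1} ω^{−kl} y^l. Then (Σ_{a+b=n−1} x^a y^b) · f_k(x) = ω^{−k} · f_k(x) · f_k(y) in B, where the sum runs over nonnegative integers a, b with a + b = n − 1. -/
open Finset MvPolynomial

/-!
With `c = ω⁻ᵏ`, `f_k(x)` is the geometric sum `G = Σ_{l<n} u^l` of `u = c x`, and `u^n = 1`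
gives `u G = G`. Hence `x^a` acts on `G` as the scalar `c^{-a} = c^{b+1}` whenever
`a + b = n - 1`, and the left-hand side collapses to `c · G · Σ_{b<n} (c y)^b`.
-/

theorem mul_geom_sum_of_pow_eq_one {R : Type*} [Ring R] {u : R} {n : ℕ} (hu : u ^ n = 1) :
    u * ∑ i ∈ range n, u ^ i = ∑ i ∈ range n, u ^ i := by
  have h := mul_geom_sum u n
  rwa [hu, sub_self, sub_mul, one_mul, sub_eq_zero] at h

theorem pow_mul_geom_sum_of_pow_eq_one {R : Type*} [Ring R] {u : R} {n : ℕ} (hu : u ^ n = 1)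
    (a : ℕ) : u ^ a * ∑ i ∈ range n, u ^ i = ∑ i ∈ range n, u ^ i := by
  induction a with
  | zero => rw [pow_zero, one_mul]
  | succ a ih => rw [pow_succ, mul_assoc, mul_geom_sum_of_pow_eq_one hu, ih]

theorem sum_antidiagonal_pow_mul_geom_sum {R : Type*} [CommRing R] {c x : R} {m : ℕ}
    (hc : c ^ (m + 1) = 1) (hx : x ^ (m + 1) = 1) (y : R) :
    (∑ ab ∈ antidiagonal m, x ^ ab.1 * y ^ ab.2) * ∑ i ∈ range (m + 1), (c * x) ^ i =
      c * ((∑ i ∈ range (m + 1), (c * x) ^ i) * ∑ i ∈ range (m + 1), (c * y) ^ i) := by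
  set G := ∑ i ∈ range (m + 1), (c * x) ^ i
  have hcx : (c * x) ^ (m + 1) = 1 := by rw [mul_pow, hc, hx, one_mul]
  have hxG : ∀ ab ∈ antidiagonal m, x ^ ab.1 * G = c ^ (ab.2 + 1) * G := by
    rintro ⟨a, b⟩ hab
    rw [HasAntidiagonal.mem_antidiagonal] at hab
    calc x ^ a * G = c ^ (a + b + 1) * x ^ a * G := by rw [hab, hc, one_mul]
      _ = c ^ (b + 1) * ((c * x) ^ a * G) := by ring
      _ = c ^ (b + 1) * G := by rw [pow_mul_geom_sum_of_pow_eq_one hcx]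
  calc (∑ ab ∈ antidiagonal m, x ^ ab.1 * y ^ ab.2) * G
      = ∑ ab ∈ antidiagonal m, c * (G * (c * y) ^ ab.2) := by
        rw [sum_mul]
        refine sum_congr rfl fun ab hab => ?_
        rw [mul_right_comm, hxG ab hab]
        ring
    _ = c * (G * ∑ i ∈ range (m + 1), (c * y) ^ i) := by
        rw [Nat.antidiagonal_eq_map', sum_map, mul_sum, mul_sum]
        rfl

theorem gornik_splitting_saddle_general (n : ℕ) (ω : ℂ)
    (hω : ω = Complex.exp (2 * Real.pi * Complex.I / n))
    (k : ℕ)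
    (fkx fky : MvPolynomial (Fin 2) ℂ ⧸
      Ideal.span {(X 0 : MvPolynomial (Fin 2) ℂ) ^ n - 1, (X 1 : MvPolynomial (Fin 2) ℂ) ^ n - 1})
    (hfkx : fkx = Ideal.Quotient.mk
      (Ideal.span {(X 0 : MvPolynomial (Fin 2) ℂ) ^ n - 1, (X 1 : MvPolynomial (Fin 2) ℂ) ^ n - 1})
      (∑ l ∈ range n, C (ω ^ (-((k : ℤ) * (l : ℤ)))) * X 0 ^ l))
    (hfky : fky = Ideal.Quotient.mk
      (Ideal.span {(X 0 : MvPolynomial (Fin 2) ℂ) ^ n - 1, (X 1 : MvPolynomial (Fin 2) ℂ) ^ n - 1})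
      (∑ l ∈ range n, C (ω ^ (-((k : ℤ) * (l : ℤ)))) * X 1 ^ l)) :
    Ideal.Quotient.mk
        (Ideal.span {(X 0 : MvPolynomial (Fin 2) ℂ) ^ n - 1, (X 1 : MvPolynomial (Fin 2) ℂ) ^ n - 1})
        (∑ ab ∈ antidiagonal (n - 1), X 0 ^ ab.1 * X 1 ^ ab.2) * fkx =
      ω ^ (-(k : ℤ)) • (fkx * fky) := by
  obtain _ | m := n
  · simp [hfkx]
  set I := Ideal.span {(X 0 : MvPolynomial (Fin 2) ℂ) ^ (m + 1) - 1,
    (X 1 : MvPolynomial (Fin 2) ℂ) ^ (m + 1) - 1}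
  set c := algebraMap ℂ (MvPolynomial (Fin 2) ℂ ⧸ I) (ω ^ (-(k : ℤ)))
  have hroot : ω ^ (m + 1) = 1 := hω ▸ (Complex.isPrimitiveRoot_exp _ m.succ_ne_zero).pow_eq_one
  have hc : c ^ (m + 1) = 1 := by
    rw [← map_pow, ← zpow_natCast, ← zpow_mul, mul_comm, zpow_mul, zpow_natCast, hroot,
      one_zpow, map_one]
  have hx : Ideal.Quotient.mk I (X 0) ^ (m + 1) = 1 := by
    rw [← map_pow, ← map_one (Ideal.Quotient.mk I), Ideal.Quotient.eq]
    exact Ideal.subset_span (Set.mem_insert _ _)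
  have hF : ∀ i,
      Ideal.Quotient.mk I (∑ l ∈ range (m + 1), C (ω ^ (-((k : ℤ) * (l : ℤ)))) * X i ^ l) =
        ∑ l ∈ range (m + 1), (c * Ideal.Quotient.mk I (X i)) ^ l := fun i => by
    simp only [map_sum, map_mul, mul_pow, c, ← map_pow, ← zpow_natCast, ← zpow_mul, neg_mul,
      ← algebraMap_eq, Ideal.Quotient.mk_algebraMap]
  rw [hfkx, hfky, hF, hF, Nat.add_sub_cancel, map_sum,
    Algebra.smul_def (A := MvPolynomial (Fin 2) ℂ ⧸ I)]
  simp only [map_mul, map_pow]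
  exact sum_antidiagonal_pow_mul_geom_sum hc hx _

/-- In `B = ℂ[x,y]/(x^n − 1, y^n − 1)` with `ω = e^{2πi/n}`, for
`f_k(x) = Σ_l ω^{−kl} x^l` and `f_k(y) = Σ_l ω^{−kl} y^l` one has
`(Σ_{a+b=n−1} x^a y^b)·f_k(x) = ω^{−k}·f_k(x)·f_k(y)`. -/
theorem gornik_splitting_saddle (n : ℕ) (hn : 1 ≤ n) (ω : ℂ)
    (hω : ω = Complex.exp (2 * Real.pi * Complex.I / n))
    (k : ℕ) (hk : k ≤ n - 1)
    (fkx fky : MvPolynomial (Fin 2) ℂ ⧸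
      Ideal.span {(X 0 : MvPolynomial (Fin 2) ℂ) ^ n - 1, (X 1 : MvPolynomial (Fin 2) ℂ) ^ n - 1})
    (hfkx : fkx = Ideal.Quotient.mk
      (Ideal.span {(X 0 : MvPolynomial (Fin 2) ℂ) ^ n - 1, (X 1 : MvPolynomial (Fin 2) ℂ) ^ n - 1})
      (∑ l ∈ range n, C (ω ^ (-((k : ℤ) * (l : ℤ)))) * X 0 ^ l))
    (hfky : fky = Ideal.Quotient.mk
      (Ideal.span {(X 0 : MvPolynomial (Fin 2) ℂ) ^ n - 1, (X 1 : MvPolynomial (Fin 2) ℂ) ^ n - 1})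
      (∑ l ∈ range n, C (ω ^ (-((k : ℤ) * (l : ℤ)))) * X 1 ^ l)) :
    Ideal.Quotient.mk
        (Ideal.span {(X 0 : MvPolynomial (Fin 2) ℂ) ^ n - 1, (X 1 : MvPolynomial (Fin 2) ℂ) ^ n - 1})
        (∑ ab ∈ antidiagonal (n - 1), X 0 ^ ab.1 * X 1 ^ ab.2) * fkx =
      ω ^ (-(k : ℤ)) • (fkx * fky) :=
  gornik_splitting_saddle_general n ω hω k fkx fky hfkx hfky
end

section
/- Let k be a field and consider a cochain complex of k-vector spaces of the form C → A ⊕ D → B ⊕ E → F, where the middle differential is given in block form by the matrix ((φ, δ), (γ, ε)) with φ : A → B, δ : D → B, γ : A → E, ε : D → E, the first differential is (α, β) : C → A ⊕ D, and the last is (μ, ν) : B ⊕ E → F. If φ is an isomorphism, then this complex is chain homotopy equivalent to the complex C → D → E → F with differentials β : C → D, ε − γ∘φ⁻¹∘δ : D → E, and ν : E → F; in particular the two complexes have isomorphic cohomology in every degree. -/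
open LinearMap

/-- Cohomology of a composable pair `f : X → Y`, `g : Y → Z` of linear maps:
the quotient `ker g / im f`. -/
abbrev pairCohomology (k : Type*) [Field k] {X Y Z : Type*}
    [AddCommGroup X] [Module k X] [AddCommGroup Y] [Module k Y]
    [AddCommGroup Z] [Module k Z] (f : X →ₗ[k] Y) (g : Y →ₗ[k] Z) :=
  LinearMap.ker g ⧸ (LinearMap.range f).comap (LinearMap.ker g).subtype

theorem pairCohomology_equiv_of_homotopy (k : Type*) [Field k]
    {X Y Z X' Y' Z' : Type*}
    [AddCommGroup X] [Module k X] [AddCommGroup Y] [Module k Y]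
    [AddCommGroup Z] [Module k Z] [AddCommGroup X'] [Module k X']
    [AddCommGroup Y'] [Module k Y'] [AddCommGroup Z'] [Module k Z']
    (d₀ : X →ₗ[k] Y) (d₁ : Y →ₗ[k] Z)
    (d₀' : X' →ₗ[k] Y') (d₁' : Y' →ₗ[k] Z')
    (fX : X →ₗ[k] X') (fY : Y →ₗ[k] Y') (fZ : Z →ₗ[k] Z')
    (gX : X' →ₗ[k] X) (gY : Y' →ₗ[k] Y) (gZ : Z' →ₗ[k] Z)
    (hf₀ : fY ∘ₗ d₀ = d₀' ∘ₗ fX) (hf₁ : fZ ∘ₗ d₁ = d₁' ∘ₗ fY)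
    (hg₀ : gY ∘ₗ d₀' = d₀ ∘ₗ gX) (hg₁ : gZ ∘ₗ d₁' = d₁ ∘ₗ gY)
    (s : Z →ₗ[k] Y) (σ : Y →ₗ[k] X)
    (hs : gY ∘ₗ fY - LinearMap.id = s ∘ₗ d₁ + d₀ ∘ₗ σ)
    (t : Z' →ₗ[k] Y') (τ : Y' →ₗ[k] X')
    (ht : fY ∘ₗ gY - LinearMap.id = t ∘ₗ d₁' + d₀' ∘ₗ τ) :
    Nonempty (pairCohomology k d₀ d₁ ≃ₗ[k] pairCohomology k d₀' d₁') := by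
  have hkf : ∀ y ∈ ker d₁, fY y ∈ ker d₁' := by
    intro y hy
    have := LinearMap.congr_fun hf₁ y
    simp only [coe_comp, Function.comp_apply] at this
    simp only [mem_ker] at hy ⊢
    rw [← this, hy, map_zero]
  have hkg : ∀ y ∈ ker d₁', gY y ∈ ker d₁ := by
    intro y hy
    have := LinearMap.congr_fun hg₁ y
    simp only [coe_comp, Function.comp_apply] at this
    simp only [mem_ker] at hy ⊢
    rw [← this, hy, map_zero]
  set p := (range d₀).comap (ker d₁).subtype with hp
  set q := (range d₀').comap (ker d₁').subtype with hq
  have himf : p ≤ q.comap (fY.restrict hkf) := by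
    rintro ⟨y, hy⟩ hyp
    simp only [hp, Submodule.mem_comap, Submodule.coe_subtype, mem_range] at hyp
    obtain ⟨x, hx⟩ := hyp
    simp only [hq, Submodule.mem_comap, Submodule.coe_subtype, mem_range, LinearMap.restrict_apply]
    refine ⟨fX x, ?_⟩
    have := LinearMap.congr_fun hf₀ x
    simp only [coe_comp, Function.comp_apply] at this
    rw [← this, hx]
  have himg : q ≤ p.comap (gY.restrict hkg) := by
    rintro ⟨y, hy⟩ hyp
    simp only [hq, Submodule.mem_comap, Submodule.coe_subtype, mem_range] at hyp
    obtain ⟨x, hx⟩ := hyp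
    simp only [hp, Submodule.mem_comap, Submodule.coe_subtype, mem_range, LinearMap.restrict_apply]
    refine ⟨gX x, ?_⟩
    have := LinearMap.congr_fun hg₀ x
    simp only [coe_comp, Function.comp_apply] at this
    rw [← this, hx]
  refine ⟨LinearEquiv.ofLinear (Submodule.mapQ p q (fY.restrict hkf) himf)
    (Submodule.mapQ q p (gY.restrict hkg) himg) ?_ ?_⟩
  · apply Submodule.linearMap_qext
    apply LinearMap.ext
    rintro ⟨y, hy⟩
    simp only [coe_comp, Function.comp_apply, Submodule.mkQ_apply, Submodule.mapQ_apply,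
      LinearMap.restrict_apply, id_coe, id_eq]
    rw [Submodule.Quotient.eq]
    have := LinearMap.congr_fun ht y
    simp only [coe_comp, Function.comp_apply, LinearMap.sub_apply, LinearMap.add_apply, id_apply] at this
    simp only [hq, Submodule.mem_comap, Submodule.coe_subtype, mem_range]
    refine ⟨τ y, ?_⟩
    have hy0 : d₁' y = 0 := hy
    have : fY (gY y) - y = t (d₁' y) + d₀' (τ y) := this
    rw [hy0, map_zero, zero_add] at this
    simp only [AddSubgroupClass.coe_sub]
    rw [← this]
  · apply Submodule.linearMap_qext
    apply LinearMap.ext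
    rintro ⟨y, hy⟩
    simp only [coe_comp, Function.comp_apply, Submodule.mkQ_apply, Submodule.mapQ_apply,
      LinearMap.restrict_apply, id_coe, id_eq]
    rw [Submodule.Quotient.eq]
    have := LinearMap.congr_fun hs y
    simp only [coe_comp, Function.comp_apply, LinearMap.sub_apply, LinearMap.add_apply, id_apply] at this
    simp only [hp, Submodule.mem_comap, Submodule.coe_subtype, mem_range]
    refine ⟨σ y, ?_⟩
    have hy0 : d₁ y = 0 := hy
    have : gY (fY y) - y = s (d₁ y) + d₀ (σ y) := this
    rw [hy0, map_zero, zero_add] at this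
    simp only [AddSubgroupClass.coe_sub]
    rw [← this]

/-- Bar-Natan's Gaussian elimination lemma: a four-term cochain complex
`C → A ⊕ D → B ⊕ E → F` whose middle differential has block form
`((φ, δ), (γ, ε))` with `φ : A ≃ B` an isomorphism is chain homotopy
equivalent to the reduced complex `C → D → E → F` with differentials
`β`, `ε − γ∘φ⁻¹∘δ`, `ν`; in particular the two complexes have isomorphic
cohomology in every degree. -/
theorem gaussian_elimination (k : Type*) [Field k]
    (C A D B E F : Type*)
    [AddCommGroup C] [Module k C] [AddCommGroup A] [Module k A]
    [AddCommGroup D] [Module k D] [AddCommGroup B] [Module k B]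
    [AddCommGroup E] [Module k E] [AddCommGroup F] [Module k F]
    (α : C →ₗ[k] A) (β : C →ₗ[k] D)
    (φ : A ≃ₗ[k] B) (δ : D →ₗ[k] B) (γ : A →ₗ[k] E) (ε : D →ₗ[k] E)
    (μ : B →ₗ[k] F) (ν : E →ₗ[k] F)
    (d₀ : C →ₗ[k] A × D) (d₁ : A × D →ₗ[k] B × E) (d₂ : B × E →ₗ[k] F)
    (hd₀ : d₀ = α.prod β)
    (hd₁ : d₁ = (φ.toLinearMap ∘ₗ fst k A D + δ ∘ₗ snd k A D).prod
      (γ ∘ₗ fst k A D + ε ∘ₗ snd k A D))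
    (hd₂ : d₂ = μ ∘ₗ fst k B E + ν ∘ₗ snd k B E)
    (hc₁ : d₁ ∘ₗ d₀ = 0) (hc₂ : d₂ ∘ₗ d₁ = 0)
    (d₀' : C →ₗ[k] D) (d₁' : D →ₗ[k] E) (d₂' : E →ₗ[k] F)
    (hd₀' : d₀' = β) (hd₁' : d₁' = ε - γ ∘ₗ φ.symm.toLinearMap ∘ₗ δ)
    (hd₂' : d₂' = ν) :
    (∃ (f₀ : C →ₗ[k] C) (f₁ : A × D →ₗ[k] D) (f₂ : B × E →ₗ[k] E) (f₃ : F →ₗ[k] F)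
       (g₀ : C →ₗ[k] C) (g₁ : D →ₗ[k] A × D) (g₂ : E →ₗ[k] B × E) (g₃ : F →ₗ[k] F)
       (s₁ : A × D →ₗ[k] C) (s₂ : B × E →ₗ[k] A × D) (s₃ : F →ₗ[k] B × E)
       (t₁ : D →ₗ[k] C) (t₂ : E →ₗ[k] D) (t₃ : F →ₗ[k] E),
      -- f is a chain map from the original complex to the reduced one
      f₁ ∘ₗ d₀ = d₀' ∘ₗ f₀ ∧ f₂ ∘ₗ d₁ = d₁' ∘ₗ f₁ ∧ f₃ ∘ₗ d₂ = d₂' ∘ₗ f₂ ∧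
      -- g is a chain map from the reduced complex to the original one
      d₀ ∘ₗ g₀ = g₁ ∘ₗ d₀' ∧ d₁ ∘ₗ g₁ = g₂ ∘ₗ d₁' ∧ d₂ ∘ₗ g₂ = g₃ ∘ₗ d₂' ∧
      -- g ∘ f is homotopic to the identity via s
      g₀ ∘ₗ f₀ - LinearMap.id = s₁ ∘ₗ d₀ ∧
      g₁ ∘ₗ f₁ - LinearMap.id = s₂ ∘ₗ d₁ + d₀ ∘ₗ s₁ ∧
      g₂ ∘ₗ f₂ - LinearMap.id = s₃ ∘ₗ d₂ + d₁ ∘ₗ s₂ ∧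
      g₃ ∘ₗ f₃ - LinearMap.id = d₂ ∘ₗ s₃ ∧
      -- f ∘ g is homotopic to the identity via t
      f₀ ∘ₗ g₀ - LinearMap.id = t₁ ∘ₗ d₀' ∧
      f₁ ∘ₗ g₁ - LinearMap.id = t₂ ∘ₗ d₁' + d₀' ∘ₗ t₁ ∧
      f₂ ∘ₗ g₂ - LinearMap.id = t₃ ∘ₗ d₂' + d₁' ∘ₗ t₂ ∧
      f₃ ∘ₗ g₃ - LinearMap.id = d₂' ∘ₗ t₃) ∧
    -- in particular the two complexes have isomorphic cohomology in every degree
    Nonempty (LinearMap.ker d₀ ≃ₗ[k] LinearMap.ker d₀') ∧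
    Nonempty (pairCohomology k d₀ d₁ ≃ₗ[k] pairCohomology k d₀' d₁') ∧
    Nonempty (pairCohomology k d₁ d₂ ≃ₗ[k] pairCohomology k d₁' d₂') ∧
    Nonempty ((F ⧸ LinearMap.range d₂) ≃ₗ[k] (F ⧸ LinearMap.range d₂')) := by
  -- component identities from d∘d = 0
  have hφα : ∀ c, φ (α c) + δ (β c) = 0 := by
    intro c
    have := LinearMap.congr_fun hc₁ c
    rw [hd₀, hd₁] at this
    simpa using congrArg Prod.fst this
  have hγα : ∀ c, γ (α c) + ε (β c) = 0 := by
    intro c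
    have := LinearMap.congr_fun hc₁ c
    rw [hd₀, hd₁] at this
    simpa using congrArg Prod.snd this
  have hμφ : ∀ a, μ (φ a) + ν (γ a) = 0 := by
    intro a
    have := LinearMap.congr_fun hc₂ ((a, 0) : A × D)
    rw [hd₁, hd₂] at this
    simpa using this
  have hμb : ∀ b : B, μ b = -ν (γ (φ.symm b)) := by
    intro b
    have := hμφ (φ.symm b)
    rw [φ.apply_symm_apply] at this
    exact eq_neg_of_add_eq_zero_left this
  have hαc : ∀ c, α c = -φ.symm (δ (β c)) := by
    intro c
    have h2 : φ (α c) = -δ (β c) := eq_neg_of_add_eq_zero_left (hφα c)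
    simpa using congrArg φ.symm h2
  have e1 : (snd k A D) ∘ₗ d₀ = d₀' ∘ₗ (LinearMap.id : C →ₗ[k] C) := by
    ext c
    simp [hd₀, hd₀']
  have e2 : (snd k B E - γ ∘ₗ φ.symm.toLinearMap ∘ₗ fst k B E) ∘ₗ d₁
      = d₁' ∘ₗ snd k A D := by
    apply LinearMap.ext
    rintro ⟨a, d⟩
    simp [hd₁, hd₁', map_add]
  have e3 : (LinearMap.id : F →ₗ[k] F) ∘ₗ d₂
      = d₂' ∘ₗ (snd k B E - γ ∘ₗ φ.symm.toLinearMap ∘ₗ fst k B E) := by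
    apply LinearMap.ext
    rintro ⟨b, e⟩
    simp [hd₂, hd₂', map_sub, hμb b]
    abel
  have e4 : d₀ ∘ₗ (LinearMap.id : C →ₗ[k] C)
      = ((-(φ.symm.toLinearMap ∘ₗ δ)).prod LinearMap.id) ∘ₗ d₀' := by
    apply LinearMap.ext
    intro c
    simp [hd₀, hd₀', Prod.ext_iff, hαc c]
  have e5 : d₁ ∘ₗ ((-(φ.symm.toLinearMap ∘ₗ δ)).prod LinearMap.id)
      = ((0 : E →ₗ[k] B).prod LinearMap.id) ∘ₗ d₁' := by
    apply LinearMap.ext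
    intro d
    simp [hd₁, hd₁', Prod.ext_iff, map_neg]
    abel
  have e6 : d₂ ∘ₗ ((0 : E →ₗ[k] B).prod LinearMap.id)
      = (LinearMap.id : F →ₗ[k] F) ∘ₗ d₂' := by
    apply LinearMap.ext
    intro e
    simp [hd₂, hd₂']
  have e7 : (LinearMap.id : C →ₗ[k] C) ∘ₗ (LinearMap.id : C →ₗ[k] C) - LinearMap.id
      = (0 : A × D →ₗ[k] C) ∘ₗ d₀ := by
    simp
  have e8 : ((-(φ.symm.toLinearMap ∘ₗ δ)).prod LinearMap.id) ∘ₗ (snd k A D) - LinearMap.id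
      = ((-(φ.symm.toLinearMap ∘ₗ fst k B E)).prod 0) ∘ₗ d₁ + d₀ ∘ₗ (0 : A × D →ₗ[k] C) := by
    apply LinearMap.ext
    rintro ⟨a, d⟩
    simp [hd₁, Prod.ext_iff, map_add, map_neg]
    abel
  have e9 : ((0 : E →ₗ[k] B).prod LinearMap.id) ∘ₗ (snd k B E - γ ∘ₗ φ.symm.toLinearMap ∘ₗ fst k B E) - LinearMap.id
      = (0 : F →ₗ[k] B × E) ∘ₗ d₂ + d₁ ∘ₗ ((-(φ.symm.toLinearMap ∘ₗ fst k B E)).prod 0) := by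
    apply LinearMap.ext
    rintro ⟨b, e⟩
    simp [hd₁, Prod.ext_iff, map_neg, map_sub]
  have e10 : (LinearMap.id : F →ₗ[k] F) ∘ₗ (LinearMap.id : F →ₗ[k] F) - LinearMap.id
      = d₂ ∘ₗ (0 : F →ₗ[k] B × E) := by
    simp
  have e11 : (LinearMap.id : C →ₗ[k] C) ∘ₗ (LinearMap.id : C →ₗ[k] C) - LinearMap.id
      = (0 : D →ₗ[k] C) ∘ₗ d₀' := by
    simp
  have e12 : (snd k A D) ∘ₗ ((-(φ.symm.toLinearMap ∘ₗ δ)).prod LinearMap.id) - LinearMap.id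
      = (0 : E →ₗ[k] D) ∘ₗ d₁' + d₀' ∘ₗ (0 : D →ₗ[k] C) := by
    apply LinearMap.ext
    intro d
    simp
  have e13 : (snd k B E - γ ∘ₗ φ.symm.toLinearMap ∘ₗ fst k B E) ∘ₗ ((0 : E →ₗ[k] B).prod LinearMap.id) - LinearMap.id
      = (0 : F →ₗ[k] E) ∘ₗ d₂' + d₁' ∘ₗ (0 : E →ₗ[k] D) := by
    apply LinearMap.ext
    intro e
    simp
  have e14 : (LinearMap.id : F →ₗ[k] F) ∘ₗ (LinearMap.id : F →ₗ[k] F) - LinearMap.id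
      = d₂' ∘ₗ (0 : F →ₗ[k] E) := by
    simp
  refine ⟨⟨LinearMap.id, snd k A D, snd k B E - γ ∘ₗ φ.symm.toLinearMap ∘ₗ fst k B E,
    LinearMap.id, LinearMap.id, (-(φ.symm.toLinearMap ∘ₗ δ)).prod LinearMap.id,
    (0 : E →ₗ[k] B).prod LinearMap.id, LinearMap.id,
    0, (-(φ.symm.toLinearMap ∘ₗ fst k B E)).prod 0, 0, 0, 0, 0,
    e1, e2, e3, e4, e5, e6, e7, e8, e9, e10, e11, e12, e13, e14⟩, ?_, ?_, ?_, ?_⟩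
  · have hker : LinearMap.ker d₀ = LinearMap.ker d₀' := by
      rw [hd₀, hd₀', LinearMap.ker_prod]
      apply le_antisymm inf_le_right
      refine le_inf ?_ le_rfl
      intro c hc
      simp only [mem_ker] at hc ⊢
      rw [hαc c, hc]; simp
    exact ⟨LinearEquiv.ofEq _ _ hker⟩
  · exact pairCohomology_equiv_of_homotopy k d₀ d₁ d₀' d₁' LinearMap.id (snd k A D)
      (snd k B E - γ ∘ₗ φ.symm.toLinearMap ∘ₗ fst k B E) LinearMap.id
      ((-(φ.symm.toLinearMap ∘ₗ δ)).prod LinearMap.id) ((0 : E →ₗ[k] B).prod LinearMap.id)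
      e1 e2 e4.symm e5.symm ((-(φ.symm.toLinearMap ∘ₗ fst k B E)).prod 0) 0 e8 0 0 e12
  · exact pairCohomology_equiv_of_homotopy k d₁ d₂ d₁' d₂' (snd k A D)
      (snd k B E - γ ∘ₗ φ.symm.toLinearMap ∘ₗ fst k B E) LinearMap.id
      ((-(φ.symm.toLinearMap ∘ₗ δ)).prod LinearMap.id) ((0 : E →ₗ[k] B).prod LinearMap.id)
      LinearMap.id e2 e3 e5.symm e6.symm 0 ((-(φ.symm.toLinearMap ∘ₗ fst k B E)).prod 0) e9 0 0 e13
  · have hrange : LinearMap.range d₂ = LinearMap.range d₂' := by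
      apply le_antisymm
      · rintro x ⟨⟨b, e⟩, rfl⟩
        rw [hd₂, hd₂']
        exact ⟨e - γ (φ.symm b), by simp [hμb b, sub_eq_add_neg]; abel⟩
      · rintro x ⟨e, rfl⟩
        rw [hd₂, hd₂']
        exact ⟨(0, e), by simp⟩
    exact ⟨Submodule.quotEquivOfEq _ _ hrange⟩
end

section
/- Let M⁰ and M¹ be ℤ-graded ℂ-vector spaces whose gradings are bounded from below, and fix an integer D ≥ 1. For i ∈ ℤ/2 let dᵢ : Mⁱ → M^{i+1} be a linear map admitting a finite decomposition dᵢ = Σ_{l=0}^{N} dᵢ^{(l)} where each dᵢ^{(l)} is homogeneous of degree D − 2l, and assume d₁∘d₀ = 0 and d₀∘d₁ = 0. Fix i ∈ ℤ/2 and suppose the leading-order complex is exact at M^{i}, i.e. ker(dᵢ^{(0)}) = im(d_{i+1}^{(0)}). Then the full complex is exact at M^{i}: ker(dᵢ) = im(d_{i+1}). -/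
open Finset DirectSum

section Aux

variable {M N : Type*} [AddCommGroup M] [Module ℂ M] [AddCommGroup N] [Module ℂ N]

/-- If `f` is homogeneous of degree `c` with respect to gradings `A`, `B`, then the
degree-`k` component of `f x` is `f` applied to the degree-`(k - c)` component of `x`. -/
lemma proj_map_homog (A : ℤ → Submodule ℂ M) (B : ℤ → Submodule ℂ N)
    [DirectSum.Decomposition A] [DirectSum.Decomposition B]
    (f : M →ₗ[ℂ] N) (c : ℤ) (hf : ∀ j : ℤ, ∀ x ∈ A j, f x ∈ B (j + c)) (x : M) (k : ℤ) :
    (DirectSum.decompose B (f x) k : N) = f (DirectSum.decompose A x (k - c) : M) := by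
  classical
  set P : N →ₗ[ℂ] N :=
    (B k).subtype ∘ₗ (DirectSum.component ℂ ℤ (fun j => ↥(B j)) k) ∘ₗ
      (DirectSum.decomposeLinearEquiv B : N →ₗ[ℂ] ⨁ j, B j) with hPdef
  have hP : ∀ y : N, (DirectSum.decompose B y k : N) = P y := fun y => rfl
  rw [hP]
  conv_lhs => rw [← DirectSum.sum_support_decompose A x]
  rw [map_sum, map_sum]
  rw [Finset.sum_eq_single (k - c)]
  · rw [← hP]
    have hmem : f (DirectSum.decompose A x (k - c) : M) ∈ B k := by
      have := hf (k - c) _ (SetLike.coe_mem (DirectSum.decompose A x (k - c)))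
      rwa [sub_add_cancel] at this
    exact DirectSum.decompose_of_mem_same B hmem
  · intro b _ hb
    rw [← hP]
    have hmem : f (DirectSum.decompose A x b : M) ∈ B (b + c) :=
      hf b _ (SetLike.coe_mem _)
    exact DirectSum.decompose_of_mem_ne B hmem (by omega)
  · intro h
    have h0 : (DirectSum.decompose A x (k - c) : M) = 0 := by
      rw [DFinsupp.notMem_support_iff.mp h]; rfl
    rw [h0, map_zero, map_zero]

end Aux

/-- Let `M⁰, M¹` be ℤ-graded ℂ-vector spaces with gradings bounded below, and
`d₀ : M⁰ → M¹`, `d₁ : M¹ → M⁰` differentials decomposing as finite sums of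
homogeneous pieces of degrees `D − 2l` (`D ≥ 1`), with `d₁∘d₀ = 0` and
`d₀∘d₁ = 0`.  If the leading-order complex is exact at `M⁰`
(`ker d₀⁽⁰⁾ = im d₁⁽⁰⁾`), then the full complex is exact at `M⁰`. -/
theorem perturbed_complex_exactness
    (M₀ M₁ : Type*) [AddCommGroup M₀] [Module ℂ M₀] [AddCommGroup M₁] [Module ℂ M₁]
    (A₀ : ℤ → Submodule ℂ M₀) (A₁ : ℤ → Submodule ℂ M₁)
    (hA₀ : DirectSum.IsInternal A₀) (hA₁ : DirectSum.IsInternal A₁)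
    (N₀ : ℤ) (hbd₀ : ∀ j < N₀, A₀ j = ⊥) (N₁ : ℤ) (hbd₁ : ∀ j < N₁, A₁ j = ⊥)
    (D : ℤ) (hD : 1 ≤ D) (N : ℕ)
    (d₀ : M₀ →ₗ[ℂ] M₁) (d₁ : M₁ →ₗ[ℂ] M₀)
    (d₀c : ℕ → (M₀ →ₗ[ℂ] M₁)) (d₁c : ℕ → (M₁ →ₗ[ℂ] M₀))
    (hd₀ : d₀ = ∑ l ∈ range (N + 1), d₀c l)
    (hd₁ : d₁ = ∑ l ∈ range (N + 1), d₁c l)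
    (hhom₀ : ∀ l ∈ range (N + 1), ∀ j : ℤ,
      Submodule.map (d₀c l) (A₀ j) ≤ A₁ (j + (D - 2 * (l : ℤ))))
    (hhom₁ : ∀ l ∈ range (N + 1), ∀ j : ℤ,
      Submodule.map (d₁c l) (A₁ j) ≤ A₀ (j + (D - 2 * (l : ℤ))))
    (hcomp₀ : d₁ ∘ₗ d₀ = 0) (hcomp₁ : d₀ ∘ₗ d₁ = 0)
    (hexact : LinearMap.ker (d₀c 0) = LinearMap.range (d₁c 0)) :
    LinearMap.ker d₀ = LinearMap.range d₁ := by
  classical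
  haveI I₀ : DirectSum.Decomposition A₀ := hA₀.chooseDecomposition
  haveI I₁ : DirectSum.Decomposition A₁ := hA₁.chooseDecomposition
  have hhom₀' : ∀ l ∈ range (N + 1), ∀ j : ℤ, ∀ x ∈ A₀ j,
      d₀c l x ∈ A₁ (j + (D - 2 * (l : ℤ))) := fun l hl j x hx =>
    hhom₀ l hl j (Submodule.mem_map_of_mem hx)
  have hhom₁' : ∀ l ∈ range (N + 1), ∀ j : ℤ, ∀ x ∈ A₁ j,
      d₁c l x ∈ A₀ (j + (D - 2 * (l : ℤ))) := fun l hl j x hx =>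
    hhom₁ l hl j (Submodule.mem_map_of_mem hx)
  have hP₀ : ∀ (k : ℤ) (y : M₀), (DirectSum.decompose A₀ y k : M₀) =
      ((A₀ k).subtype ∘ₗ (DirectSum.component ℂ ℤ (fun j => ↥(A₀ j)) k) ∘ₗ
        (DirectSum.decomposeLinearEquiv A₀ : M₀ →ₗ[ℂ] ⨁ j, A₀ j)) y := fun _ _ => rfl
  have hP₁ : ∀ (k : ℤ) (y : M₁), (DirectSum.decompose A₁ y k : M₁) =
      ((A₁ k).subtype ∘ₗ (DirectSum.component ℂ ℤ (fun j => ↥(A₁ j)) k) ∘ₗ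
        (DirectSum.decomposeLinearEquiv A₁ : M₁ →ₗ[ℂ] ⨁ j, A₁ j)) y := fun _ _ => rfl
  have key : ∀ p : ℤ, N₀ - 1 ≤ p → ∀ x : M₀,
      (∀ j : ℤ, p < j → (DirectSum.decompose A₀ x j : M₀) = 0) → d₀ x = 0 →
      ∃ y, d₁ y = x := by
    intro p hp
    refine Int.le_induction (motive := fun p _ => ∀ x : M₀,
        (∀ j : ℤ, p < j → (DirectSum.decompose A₀ x j : M₀) = 0) → d₀ x = 0 →
        ∃ y, d₁ y = x) ?_ ?_ p hp
    · intro x hx _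
      have hzero : ∀ j : ℤ, (DirectSum.decompose A₀ x j : M₀) = 0 := by
        intro j
        by_cases h : N₀ - 1 < j
        · exact hx j h
        · have hmem := SetLike.coe_mem (DirectSum.decompose A₀ x j)
          have hle : A₀ j ≤ ⊥ := (hbd₀ j (by omega)).le
          exact (Submodule.mem_bot ℂ).mp (hle hmem)
      have hx0 : x = 0 := by
        conv_lhs => rw [← DirectSum.sum_support_decompose A₀ x]
        exact Finset.sum_eq_zero fun j _ => hzero j
      exact ⟨0, by simp [hx0]⟩
    · intro p hp IH x hx hdx
      set q : ℤ := p + 1 with hq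
      have hxqmem : (DirectSum.decompose A₀ x q : M₀) ∈ A₀ q := SetLike.coe_mem _
      set xq : M₀ := (DirectSum.decompose A₀ x q : M₀) with hxqdef
      -- Step 1: the leading differential kills the top component.
      have h1 : d₀c 0 xq = 0 := by
        have e1 : (DirectSum.decompose A₁ (d₀ x) (q + D) : M₁)
            = ∑ l ∈ range (N + 1), (DirectSum.decompose A₁ (d₀c l x) (q + D) : M₁) := by
          rw [hd₀, LinearMap.sum_apply]
          simp only [hP₁]
          rw [map_sum]
        have hterm : ∀ l ∈ range (N + 1),
            (DirectSum.decompose A₁ (d₀c l x) (q + D) : M₁)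
              = if l = 0 then d₀c 0 xq else 0 := by
          intro l hl
          rw [proj_map_homog A₀ A₁ (d₀c l) (D - 2 * (l : ℤ)) (hhom₀' l hl) x (q + D)]
          by_cases hl0 : l = 0
          · subst hl0
            simp only [if_pos rfl]
            have hidx : q + D - (D - 2 * ((0 : ℕ) : ℤ)) = q := by push_cast; ring
            rw [hidx]
            simp [← hxqdef]
          · have hl1 : (1 : ℤ) ≤ (l : ℤ) := by exact_mod_cast Nat.one_le_iff_ne_zero.mpr hl0
            rw [hx (q + D - (D - 2 * (l : ℤ))) (by omega), map_zero, if_neg hl0]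
        have e0 : (0 : M₁) = ∑ l ∈ range (N + 1),
            (if l = 0 then d₀c 0 xq else 0 : M₁) := by
          rw [← Finset.sum_congr rfl hterm, ← e1, hdx]
          simp
        rw [Finset.sum_ite_eq' (range (N + 1)) 0 (fun _ => d₀c 0 xq)] at e0
        simpa using e0.symm
      -- Step 2: find a homogeneous leading primitive for the top component.
      obtain ⟨z, hz⟩ : ∃ z, d₁c 0 z = xq := by
        have hk : xq ∈ LinearMap.ker (d₀c 0) := h1
        rw [hexact] at hk
        exact hk
      have hz'mem : (DirectSum.decompose A₁ z (q - D) : M₁) ∈ A₁ (q - D) := SetLike.coe_mem _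
      set z' : M₁ := (DirectSum.decompose A₁ z (q - D) : M₁) with hz'def
      have h2 : d₁c 0 z' = xq := by
        have e2 := proj_map_homog A₁ A₀ (d₁c 0) (D - 2 * ((0 : ℕ) : ℤ))
          (hhom₁' 0 (by simp)) z q
        rw [hz, DirectSum.decompose_of_mem_same A₀ hxqmem] at e2
        have : q - (D - 2 * ((0 : ℕ) : ℤ)) = q - D := by norm_num
        rw [this] at e2
        exact e2.symm
      -- Step 3: subtract and use the inductive hypothesis.
      have hd₁z'0 : d₀ (d₁ z') = 0 := by
        have := congrArg (fun f => f z') hcomp₁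
        simpa using this
      have hdx' : d₀ (x - d₁ z') = 0 := by rw [map_sub, hdx, hd₁z'0, sub_zero]
      have hproj' : ∀ j : ℤ, p < j → (DirectSum.decompose A₀ (x - d₁ z') j : M₀) = 0 := by
        intro j hj
        have hterm2 : ∀ l ∈ range (N + 1),
            (DirectSum.decompose A₀ (d₁c l z') j : M₀)
              = if j = q ∧ l = 0 then xq else 0 := by
          intro l hl
          rw [proj_map_homog A₁ A₀ (d₁c l) (D - 2 * (l : ℤ)) (hhom₁' l hl) z' j]
          by_cases hc : j - (D - 2 * (l : ℤ)) = q - D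
          · rw [hc, DirectSum.decompose_of_mem_same A₁ hz'mem]
            by_cases hl0 : l = 0
            · have hjq : j = q := by
                subst hl0; push_cast at hc; omega
              rw [if_pos ⟨hjq, hl0⟩, hl0, h2]
            · have hl1 : (1 : ℤ) ≤ (l : ℤ) := by exact_mod_cast Nat.one_le_iff_ne_zero.mpr hl0
              exfalso
              omega
          · rw [DirectSum.decompose_of_mem_ne A₁ hz'mem (fun h => hc h.symm), map_zero,
              if_neg (by rintro ⟨rfl, rfl⟩; push_cast at hc; omega)]
        have e3 : (DirectSum.decompose A₀ (d₁ z') j : M₀)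
            = ∑ l ∈ range (N + 1), (DirectSum.decompose A₀ (d₁c l z') j : M₀) := by
          rw [hd₁, LinearMap.sum_apply]
          simp only [hP₀]
          rw [map_sum]
        have e4 : (DirectSum.decompose A₀ (d₁ z') j : M₀) = if j = q then xq else 0 := by
          rw [e3, Finset.sum_congr rfl hterm2]
          by_cases hjq : j = q
          · subst hjq
            simp
          · simp [hjq]
        have e5 : (DirectSum.decompose A₀ (x - d₁ z') j : M₀)
            = (DirectSum.decompose A₀ x j : M₀) - (DirectSum.decompose A₀ (d₁ z') j : M₀) := by
          simp only [hP₀]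
          rw [map_sub]
        rw [e5, e4]
        rcases eq_or_lt_of_le (show q ≤ j by omega) with hjq | hjq
        · rw [if_pos hjq.symm, ← hjq, ← hxqdef, sub_self]
        · rw [if_neg (by omega), hx j hjq, sub_zero]
      obtain ⟨y', hy'⟩ := IH (x - d₁ z') hproj' hdx'
      exact ⟨y' + z', by rw [map_add, hy', sub_add_cancel]⟩
  ext x
  simp only [LinearMap.mem_ker, LinearMap.mem_range]
  constructor
  · intro hdx
    set s := (DirectSum.decompose A₀ x).support with hs
    have hne : (insert (N₀ - 1) s).Nonempty := ⟨N₀ - 1, Finset.mem_insert_self _ _⟩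
    set p := (insert (N₀ - 1) s).max' hne with hpdef
    have hp : N₀ - 1 ≤ p := Finset.le_max' _ _ (Finset.mem_insert_self _ _)
    refine key p hp x ?_ hdx
    intro j hj
    have hjs : j ∉ s := fun hmem =>
      absurd (Finset.le_max' _ j (Finset.mem_insert_of_mem hmem)) (not_le.mpr hj)
    rw [DFinsupp.notMem_support_iff.mp hjs]
    rfl
  · rintro ⟨y, rfl⟩
    have := congrArg (fun f => f y) hcomp₁
    simpa using this
end
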